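/- For all natural numbers m and n, Cat(n+1)·F(n + 2m) = Σ_{i=0}^{n} Cat(i)·L(i + m)·Cat(n−i)·F(n−i + m), where Cat(n) denotes the n-th Catalan number. -/

import Mathlib

noncomputable def genFib (a b : ℝ) : ℕ → ℝ
  | 0 => 0
  | 1 => 1
  | n + 2 => a * genFib a b (n + 1) + b * genFib a b n

noncomputable def genLuc (a b : ℝ) : ℕ → ℝ
  | 0 => 2
  | 1 => a
  | n + 2 => a * genLuc a b (n + 1) + b * genLuc a b n

/-!
Symmetrizing the sum under `i ↦ n - i` and using `L p F q + L q F p = 2 F (p + q)` turns it into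
`F (n + 2m)` times the Catalan convolution `∑ Cat i Cat (n - i) = Cat (n + 1)`.
-/

open Finset

theorem genFib_add_two (a b : ℝ) (n : ℕ) :
    genFib a b (n + 2) = a * genFib a b (n + 1) + b * genFib a b n := rfl

theorem genLuc_add_two (a b : ℝ) (n : ℕ) :
    genLuc a b (n + 2) = a * genLuc a b (n + 1) + b * genLuc a b n := rfl

theorem genLuc_eq_two_mul_genFib_succ_sub (a b : ℝ) (n : ℕ) :
    genLuc a b n = 2 * genFib a b (n + 1) - a * genFib a b n := by
  induction n using Nat.twoStepInduction with
  | zero => simp [genLuc, genFib]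
  | one => simp [genLuc, genFib]; ring
  | more k ih₀ ih₁ =>
    rw [genLuc_add_two, ih₀, ih₁]
    linear_combination a * genFib_add_two a b k - 2 * genFib_add_two a b (k + 1)

theorem two_mul_genFib_add (a b : ℝ) (p q : ℕ) :
    2 * genFib a b (p + q) = genLuc a b p * genFib a b q + genLuc a b q * genFib a b p := by
  induction q using Nat.twoStepInduction with
  | zero => simp [genLuc, genFib]
  | one => simp [genLuc_eq_two_mul_genFib_succ_sub, genFib]; ring
  | more k ih₀ ih₁ =>
    linear_combination a * ih₁ + b * ih₀ + 2 * genFib_add_two a b (p + k) -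
      genLuc a b p * genFib_add_two a b k - genFib a b p * genLuc_add_two a b k

theorem sum_antidiagonal_mul_genLuc_mul_genFib (a b : ℝ) (c : ℕ → ℝ) (m n : ℕ) :
    ∑ pq ∈ antidiagonal n, c pq.1 * genLuc a b (pq.1 + m) * c pq.2 * genFib a b (pq.2 + m) =
      (∑ pq ∈ antidiagonal n, c pq.1 * c pq.2) * genFib a b (n + 2 * m) := by
  set S := ∑ pq ∈ antidiagonal n, c pq.1 * genLuc a b (pq.1 + m) * c pq.2 * genFib a b (pq.2 + m)
  have hswap : S = ∑ pq ∈ antidiagonal n,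
      c pq.2 * genLuc a b (pq.2 + m) * c pq.1 * genFib a b (pq.1 + m) :=
    Nat.sum_antidiagonal_swap.symm
  have hpair : ∀ pq ∈ antidiagonal n,
      c pq.1 * genLuc a b (pq.1 + m) * c pq.2 * genFib a b (pq.2 + m) +
        c pq.2 * genLuc a b (pq.2 + m) * c pq.1 * genFib a b (pq.1 + m) =
      2 * (c pq.1 * c pq.2 * genFib a b (n + 2 * m)) := by
    intro pq hpq
    have hsum : pq.1 + m + (pq.2 + m) = n + 2 * m := by rw [← mem_antidiagonal.mp hpq]; ring
    have hF := two_mul_genFib_add a b (pq.1 + m) (pq.2 + m)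
    rw [hsum] at hF
    linear_combination c pq.1 * c pq.2 * hF.symm
  have h2S : 2 * S = 2 * ((∑ pq ∈ antidiagonal n, c pq.1 * c pq.2) * genFib a b (n + 2 * m)) := by
    rw [two_mul, sum_mul, mul_sum]
    nth_rewrite 2 [hswap]
    rw [← sum_add_distrib]
    exact sum_congr rfl hpair
  linarith

theorem genFib_catalan_identity (a b : ℝ) (m n : ℕ) :
    (catalan (n + 1) : ℝ) * genFib a b (n + 2 * m) =
      ∑ i ∈ Finset.range (n + 1),
        (catalan i : ℝ) * genLuc a b (i + m) * (catalan (n - i) : ℝ) *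
          genFib a b (n - i + m) := by
  rw [← Nat.sum_antidiagonal_eq_sum_range_succ
    (fun i j => (catalan i : ℝ) * genLuc a b (i + m) * (catalan j : ℝ) * genFib a b (j + m)),
    catalan_succ']
  push_cast
  exact (sum_antidiagonal_mul_genLuc_mul_genFib a b (fun i => (catalan i : ℝ)) m n).symm
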